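/- arXiv:2402.04649 — 2 statements merged into one kernel-verified Lean document; each statement's English description precedes it below -/
import Mathlib

section
/- Let n ≥ 2 and let f : [0, π/2] → (0, ∞) be a continuous positive function. Let ν be the probability measure on the upper half-sphere S^n_+ with density x ↦ f(d(x,N)) with respect to σ_+ (suitably normalized so that ν is a probability measure). Suppose T : S^n_+ → S^n_+ is a measurable map with T_#σ_+ = ν which minimizes ∫ d(x, S(x))² dσ_+(x) among all measurable maps S with S_#σ_+ = ν (i.e., T is a quadratic-cost optimal transport map from σ_+ to ν). If T is 1-Lipschitz with respect to the geodesic distance d, then ν = σ_+. -/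
/-! The density of `ν` is bounded below on `S^n_+`, so `ν` charges every cap `B(z, r) ∩ S^n_+`.
Since `ν = T_#σ_+`, the compact set `T(S^n_+)` is therefore all of `S^n_+`. A surjective
1-Lipschitz self-map of a compact metric space is an isometry: a backward orbit of a pair of
points accumulates, so the pair almost returns to itself under some iterate. An isometric bijection
of `S^n_+` preserves the Hausdorff measure, hence `ν = T_#σ_+ = σ_+`. -/

open MeasureTheory Real

noncomputable section

/-- Euclidean space `ℝ^{n+1}`. -/
abbrev Euc (n : ℕ) := EuclideanSpace ℝ (Fin (n + 1))

/-- The unit sphere `S^n ⊆ ℝ^{n+1}`. -/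
def unitSphere (n : ℕ) : Set (Euc n) := Metric.sphere 0 1

/-- The closed upper half-sphere `S^n_+`. -/
def upperHemi (n : ℕ) : Set (Euc n) := {x ∈ unitSphere n | 0 ≤ x (Fin.last n)}

/-- The equator `C = S^n_+ ∩ {x_{n+1} = 0}`. -/
def equator (n : ℕ) : Set (Euc n) := {x ∈ upperHemi n | x (Fin.last n) = 0}

/-- The geodesic distance on the sphere: `d(x,y) = arccos (x ⬝ y)`. -/
def geod {n : ℕ} (x y : Euc n) : ℝ := Real.arccos (inner ℝ x y)

/-- The north pole `N = (0,…,0,1)`. -/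
def northPole (n : ℕ) : Euc n := EuclideanSpace.single (Fin.last n) 1

/-- The uniform probability measure `σ_+` on the upper half-sphere, i.e. the normalized
restriction to `S^n_+` of the `n`-dimensional Hausdorff measure. -/
def sigmaPlus (n : ℕ) : Measure (Euc n) :=
  ((μH[n] : Measure (Euc n)) (upperHemi n))⁻¹ • (μH[n] : Measure (Euc n)).restrict (upperHemi n)

open scoped ENNReal NNReal RealInnerProductSpace
open Function Set Metric

section NonexpandingSelfMap

variable {X : Type*} [PseudoMetricSpace X] [CompactSpace X] {f : X → X}

theorem LipschitzWith.exists_dist_iterate_lt (hf : LipschitzWith 1 f) (hsurj : Surjective f)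
    (p : X) {ε : ℝ} (hε : 0 < ε) : ∃ m, 0 < m ∧ dist (f^[m] p) p < ε := by
  -- Two nearby points `q i`, `q j` (`i < j`) of a backward orbit of `p` are sent by `f^[j]`
  -- to `f^[j - i] p` and `p`.
  obtain ⟨g, hg⟩ := hsurj.hasRightInverse
  set q : ℕ → X := fun k => g^[k] p
  have hq : ∀ k, f^[k] (q k) = p := fun k => (hg.iterate k) p
  obtain ⟨a, φ, hφ, hconv⟩ := CompactSpace.tendsto_subseq q
  obtain ⟨N, hN⟩ := Metric.cauchySeq_iff'.1 hconv.cauchySeq ε hε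
  set i := φ N
  set j := φ (N + 1)
  have hij : i < j := hφ (Nat.lt_succ_self N)
  refine ⟨j - i, Nat.sub_pos_of_lt hij, ?_⟩
  calc dist (f^[j - i] p) p = dist (f^[j] (q i)) (f^[j] (q j)) := by
        rw [hq j, ← Nat.sub_add_cancel hij.le, iterate_add_apply, hq i, Nat.sub_add_cancel hij.le]
    _ ≤ dist (q i) (q j) := by simpa using (hf.iterate j).dist_le_mul (q i) (q j)
    _ < ε := by rw [dist_comm]; exact hN (N + 1) N.le_succ

theorem LipschitzWith.isometry_of_surjective (hf : LipschitzWith 1 f) (hsurj : Surjective f) :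
    Isometry f := by
  have hf_le : ∀ x y, dist (f x) (f y) ≤ dist x y := fun x y => by
    simpa using hf.dist_le_mul x y
  have hff : LipschitzWith 1 (Prod.map f f) := LipschitzWith.of_dist_le_mul fun a b => by
    simpa [Prod.dist_eq] using max_le_max (hf_le a.1 b.1) (hf_le a.2 b.2)
  refine Isometry.of_dist_eq fun x y => (hf_le x y).antisymm ?_
  refine le_of_forall_pos_le_add fun ε hε => ?_
  obtain ⟨m, hm, hclose⟩ := hff.exists_dist_iterate_lt (hsurj.prodMap hsurj) (x, y) (half_pos hε)
  obtain ⟨hx, hy⟩ : dist (f^[m] x) x < ε / 2 ∧ dist (f^[m] y) y < ε / 2 := by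
    simpa [Prod.map_iterate, Prod.dist_eq] using hclose
  obtain ⟨k, rfl⟩ : ∃ k, m = k + 1 := ⟨m - 1, by omega⟩
  have hk : dist (f^[k + 1] x) (f^[k + 1] y) ≤ dist (f x) (f y) := by
    simpa [iterate_succ_apply] using (hf.iterate k).dist_le_mul (f x) (f y)
  calc dist x y ≤ dist x (f^[k + 1] x) + dist (f^[k + 1] x) (f^[k + 1] y) + dist (f^[k + 1] y) y :=
        dist_triangle4 _ _ _ _
    _ ≤ dist (f x) (f y) + ε := by
        rw [dist_comm x]; linarith

end NonexpandingSelfMap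

theorem dist_le_dist_of_arccos_inner_le {E : Type*} [NormedAddCommGroup E] [InnerProductSpace ℝ E]
    {x y a b : E} (hx : ‖x‖ = 1) (hy : ‖y‖ = 1) (ha : ‖a‖ = 1) (hb : ‖b‖ = 1)
    (h : arccos ⟪a, b⟫ ≤ arccos ⟪x, y⟫) : dist a b ≤ dist x y := by
  have inner_mem_Icc {u v : E} (hu : ‖u‖ = 1) (hv : ‖v‖ = 1) : ⟪u, v⟫ ∈ Icc (-1 : ℝ) 1 := by
    have := abs_real_inner_le_norm u v
    rw [hu, hv, mul_one] at this
    exact abs_le.1 this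
  have hinner : ⟪x, y⟫ ≤ ⟪a, b⟫ :=
    (strictAntiOn_arccos.le_iff_ge (inner_mem_Icc ha hb) (inner_mem_Icc hx hy)).1 h
  rw [dist_eq_norm, dist_eq_norm,
    ← pow_le_pow_iff_left₀ (norm_nonneg _) (norm_nonneg _) two_ne_zero,
    norm_sub_sq_real, norm_sub_sq_real, hx, hy, ha, hb]
  linarith

section UpperHemisphere

variable {n : ℕ}

theorem norm_eq_one_of_mem_upperHemi {x : Euc n} (hx : x ∈ upperHemi n) : ‖x‖ = 1 :=
  mem_sphere_zero_iff_norm.1 hx.1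

theorem isCompact_upperHemi (n : ℕ) : IsCompact (upperHemi n) :=
  (isCompact_sphere 0 1).inter_right
    (isClosed_le continuous_const (EuclideanSpace.proj (Fin.last n)).continuous)

theorem measurableSet_upperHemi (n : ℕ) : MeasurableSet (upperHemi n) :=
  (isCompact_upperHemi n).isClosed.measurableSet

theorem geod_northPole_mem_Icc {x : Euc n} (hx : x ∈ upperHemi n) :
    geod x (northPole n) ∈ Icc 0 (π / 2) := by
  have hinner : ⟪x, northPole n⟫ = x (Fin.last n) := by
    simp [northPole, EuclideanSpace.inner_single_right]
  exact ⟨arccos_nonneg _, by rw [geod, hinner]; exact arccos_le_pi_div_two.2 hx.2⟩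

theorem lipschitzOnWith_one_of_geod_le {T : Euc n → Euc n}
    (hT : MapsTo T (upperHemi n) (upperHemi n))
    (h : ∀ x ∈ upperHemi n, ∀ y ∈ upperHemi n, geod (T x) (T y) ≤ geod x y) :
    LipschitzOnWith 1 T (upperHemi n) :=
  LipschitzOnWith.of_dist_le_mul fun x hx y hy => by
    simpa using dist_le_dist_of_arccos_inner_le (norm_eq_one_of_mem_upperHemi hx)
      (norm_eq_one_of_mem_upperHemi hy) (norm_eq_one_of_mem_upperHemi (hT hx))
      (norm_eq_one_of_mem_upperHemi (hT hy)) (h x hx y hy)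

def dropLast (x : Euc n) : EuclideanSpace ℝ (Fin n) := WithLp.toLp 2 fun i => x i.castSucc

-- `S^n_+` is the graph of `c ↦ √(1 - ‖c‖²)` over the closed unit ball.
def liftUpper (c : EuclideanSpace ℝ (Fin n)) : Euc n :=
  WithLp.toLp 2 (Fin.snoc (α := fun _ => ℝ) (fun i => c i) √(1 - ‖c‖ ^ 2))

theorem norm_sq_eq_norm_dropLast_sq_add (x : Euc n) :
    ‖x‖ ^ 2 = ‖dropLast x‖ ^ 2 + x (Fin.last n) ^ 2 := by
  simp [EuclideanSpace.real_norm_sq_eq, Fin.sum_univ_castSucc, dropLast]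

theorem lipschitzWith_dropLast : LipschitzWith 1 (dropLast (n := n)) :=
  LipschitzWith.of_dist_le_mul fun x y => by
    have h := norm_sq_eq_norm_dropLast_sq_add (x - y)
    have hsub : dropLast (x - y) = dropLast x - dropLast y := rfl
    rw [NNReal.coe_one, one_mul, dist_eq_norm, dist_eq_norm, ← hsub]
    nlinarith [norm_nonneg (dropLast (x - y)), norm_nonneg (x - y)]

theorem continuous_liftUpper : Continuous (liftUpper (n := n)) :=
  (PiLp.continuous_toLp 2 _).comp <| Continuous.finSnoc (PiLp.continuous_ofLp 2 fun _ => ℝ)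
    (continuous_const.sub (continuous_norm.pow 2)).sqrt

@[simp]
theorem dropLast_liftUpper (c : EuclideanSpace ℝ (Fin n)) : dropLast (liftUpper c) = c := by
  ext i; simp [dropLast, liftUpper]

theorem liftUpper_last (c : EuclideanSpace ℝ (Fin n)) :
    liftUpper c (Fin.last n) = √(1 - ‖c‖ ^ 2) := by
  simp [liftUpper]

theorem liftUpper_mem_upperHemi {c : EuclideanSpace ℝ (Fin n)} (hc : ‖c‖ ≤ 1) :
    liftUpper c ∈ upperHemi n := by
  refine ⟨mem_sphere_zero_iff_norm.2 ?_, by rw [liftUpper_last]; positivity⟩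
  have h := norm_sq_eq_norm_dropLast_sq_add (liftUpper c)
  rw [dropLast_liftUpper, liftUpper_last, sq_sqrt (by nlinarith [norm_nonneg c])] at h
  nlinarith [norm_nonneg (liftUpper c)]

theorem liftUpper_dropLast {x : Euc n} (hx : x ∈ upperHemi n) : liftUpper (dropLast x) = x := by
  have h := norm_sq_eq_norm_dropLast_sq_add x
  rw [norm_eq_one_of_mem_upperHemi hx] at h
  ext i
  induction i using Fin.lastCases with
  | last => rw [liftUpper_last, show 1 - ‖dropLast x‖ ^ 2 = x (Fin.last n) ^ 2 by linarith,
      sqrt_sq hx.2]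
  | cast i => simp [liftUpper, dropLast]

theorem hausdorffMeasure_ball_inter_upperHemi_pos {z : Euc n} (hz : z ∈ upperHemi n) {r : ℝ}
    (hr : 0 < r) : 0 < μH[n] (ball z r ∩ upperHemi n) := by
  set U := liftUpper ⁻¹' ball z r ∩ ball 0 1
  have hU : IsOpen U := (isOpen_ball.preimage continuous_liftUpper).inter isOpen_ball
  have hUne : U.Nonempty := by
    have hz_closure : dropLast z ∈ closure (ball 0 1) := by
      rw [closure_ball _ one_ne_zero, mem_closedBall_zero_iff]
      have := norm_sq_eq_norm_dropLast_sq_add z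
      rw [norm_eq_one_of_mem_upperHemi hz] at this
      nlinarith [norm_nonneg (dropLast z)]
    exact mem_closure_iff.1 hz_closure _ (isOpen_ball.preimage continuous_liftUpper)
      (by rw [mem_preimage, liftUpper_dropLast hz]; exact mem_ball_self hr)
  have hUsub : U ⊆ dropLast '' (ball z r ∩ upperHemi n) := fun c hc =>
    ⟨liftUpper c, ⟨hc.1, liftUpper_mem_upperHemi (mem_ball_zero_iff.1 hc.2).le⟩,
      dropLast_liftUpper c⟩
  have hU_pos : 0 < μH[n] U := by
    simpa [finrank_euclideanSpace_fin] using
      hU.measure_pos μH[Module.finrank ℝ (EuclideanSpace ℝ (Fin n))] hUne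
  calc 0 < μH[n] U := hU_pos
    _ ≤ μH[n] (dropLast '' (ball z r ∩ upperHemi n)) := measure_mono hUsub
    _ ≤ μH[n] (ball z r ∩ upperHemi n) := by
      simpa using lipschitzWith_dropLast.hausdorffMeasure_image_le (Nat.cast_nonneg n) _

end UpperHemisphere

section Measures

variable {X : Type*} [MeasurableSpace X]

theorem withDensity_pos_of_le {μ : Measure X} {f : X → ℝ≥0∞} {s t : Set X} {ε : ℝ≥0∞}
    (hs : μ sᶜ = 0) (hε : ε ≠ 0) (hf : ∀ x ∈ s, ε ≤ f x) (ht : MeasurableSet t) (hμt : 0 < μ t) :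
    0 < μ.withDensity f t := by
  rw [withDensity_apply _ ht]
  calc 0 < ε * μ t := ENNReal.mul_pos hε hμt.ne'
    _ = ∫⁻ _ in t, ε ∂μ := (setLIntegral_const t ε).symm
    _ ≤ ∫⁻ x in t, f x ∂μ := lintegral_mono_ae <| ae_restrict_of_ae <|
        (measure_eq_zero_iff_ae_notMem.1 hs).mono fun x hx => hf x (not_not.1 hx)

theorem surjOn_of_map_ball_pos {Y : Type*} [TopologicalSpace X] [MetricSpace Y] [MeasurableSpace Y]
    [OpensMeasurableSpace Y] {μ : Measure X} {T : X → Y} {s : Set X} {t : Set Y}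
    (hs : IsCompact s) (hT : ContinuousOn T s) (hT_meas : Measurable T) (hμs : μ sᶜ = 0)
    (hpos : ∀ z ∈ t, ∀ r > 0, 0 < μ.map T (ball z r)) : SurjOn T s t := by
  intro z hz
  by_contra hzs
  obtain ⟨r, hr, hball⟩ :=
    Metric.isOpen_iff.1 (hs.image_of_continuousOn hT).isClosed.isOpen_compl z hzs
  have hpre : T ⁻¹' ball z r ⊆ sᶜ := fun x hx hxs => hball hx ⟨x, hxs, rfl⟩
  exact (hpos z hz r hr).ne' <| by
    rw [Measure.map_apply hT_meas measurableSet_ball]; exact measure_mono_null hpre hμs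

theorem map_restrict_hausdorffMeasure_of_isometry [EMetricSpace X] [BorelSpace X] {s : Set X}
    {T : X → X} (hT : Measurable T) (hmaps : MapsTo T s s) (hiso : Isometry (hmaps.restrict T s s))
    (hsurj : Surjective (hmaps.restrict T s s)) {d : ℝ} (hd : 0 ≤ d) :
    (μH[d].restrict s).map T = μH[d].restrict s := by
  ext A hA
  rw [Measure.map_apply hT hA, Measure.restrict_apply (hT hA), Measure.restrict_apply hA]
  have hval : Isometry ((↑) : s → X) := isometry_subtype_coe
  have hpre : T ⁻¹' A ∩ s = (↑) '' (hmaps.restrict T s s ⁻¹' ((↑) ⁻¹' A)) := by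
    ext x
    simp [and_comm]
  rw [hpre, hval.hausdorffMeasure_image (Or.inl hd), hiso.hausdorffMeasure_preimage (Or.inr hsurj),
    hsurj.range_eq, inter_univ, ← hval.hausdorffMeasure_image (Or.inl hd),
    Subtype.image_preimage_coe, inter_comm]

end Measures

section SigmaPlus

variable {n : ℕ}

theorem sigmaPlus_apply (s : Set (Euc n)) :
    sigmaPlus n s = (μH[n] (upperHemi n))⁻¹ * μH[n] (s ∩ upperHemi n) := by
  rw [sigmaPlus, Measure.smul_apply, Measure.restrict_apply' (measurableSet_upperHemi n),
    smul_eq_mul]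

theorem sigmaPlus_compl_upperHemi (n : ℕ) : sigmaPlus n (upperHemi n)ᶜ = 0 := by
  simp [sigmaPlus_apply]

theorem hausdorffMeasure_upperHemi_ne_top (h : sigmaPlus n ≠ 0) : μH[n] (upperHemi n) ≠ ⊤ := by
  contrapose! h
  simp [sigmaPlus, h]

theorem sigmaPlus_ball_pos (h : sigmaPlus n ≠ 0) {z : Euc n} (hz : z ∈ upperHemi n) {r : ℝ}
    (hr : 0 < r) : 0 < sigmaPlus n (ball z r) := by
  rw [sigmaPlus_apply]
  exact ENNReal.mul_pos (ENNReal.inv_ne_zero.2 (hausdorffMeasure_upperHemi_ne_top h))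
    (hausdorffMeasure_ball_inter_upperHemi_pos hz hr).ne'

theorem map_sigmaPlus_of_isometry {T : Euc n → Euc n} (hT : Measurable T)
    (hmaps : MapsTo T (upperHemi n) (upperHemi n)) (hiso : Isometry (hmaps.restrict T _ _))
    (hsurj : Surjective (hmaps.restrict T _ _)) : (sigmaPlus n).map T = sigmaPlus n := by
  rw [sigmaPlus, Measure.map_smul,
    map_restrict_hausdorffMeasure_of_isometry hT hmaps hiso hsurj (Nat.cast_nonneg n)]

end SigmaPlus

theorem stmt0_general (n : ℕ) (f : ℝ → ℝ)
    (hf_cont : ContinuousOn f (Set.Icc 0 (π / 2)))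
    (hf_pos : ∀ t ∈ Set.Icc 0 (π / 2), 0 < f t)
    (ν : Measure (Euc n)) [IsProbabilityMeasure ν] (Z : ℝ) (hZ : 0 < Z)
    (hν : ν = (sigmaPlus n).withDensity
      (fun x => ENNReal.ofReal (f (geod x (northPole n)) / Z)))
    (T : Euc n → Euc n) (hT_meas : Measurable T)
    (hT_maps : ∀ x ∈ upperHemi n, T x ∈ upperHemi n)
    (hT_push : Measure.map T (sigmaPlus n) = ν)
    (hT_lip : ∀ x ∈ upperHemi n, ∀ y ∈ upperHemi n, geod (T x) (T y) ≤ geod x y) :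
    ν = sigmaPlus n := by
  have hσ : sigmaPlus n ≠ 0 := fun h =>
    IsProbabilityMeasure.ne_zero ν (by rw [hν, h, withDensity_zero_left])
  obtain ⟨t₀, ht₀, hmin⟩ := isCompact_Icc.exists_isMinOn (nonempty_Icc.2 (by positivity)) hf_cont
  have hν_ball : ∀ z ∈ upperHemi n, ∀ r > 0, 0 < ν (ball z r) := fun z hz r hr => by
    rw [hν]
    exact withDensity_pos_of_le (sigmaPlus_compl_upperHemi n)
      (ENNReal.ofReal_pos.2 (div_pos (hf_pos t₀ ht₀) hZ)).ne'
      (fun x hx => ENNReal.ofReal_le_ofReal <|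
        div_le_div_of_nonneg_right (hmin (geod_northPole_mem_Icc hx)) hZ.le)
      measurableSet_ball (sigmaPlus_ball_pos hσ hz hr)
  have hT_lipOn := lipschitzOnWith_one_of_geod_le hT_maps hT_lip
  have hsurj : SurjOn T (upperHemi n) (upperHemi n) :=
    surjOn_of_map_ball_pos (isCompact_upperHemi n) hT_lipOn.continuousOn hT_meas
      (sigmaPlus_compl_upperHemi n) (by rwa [hT_push])
  have : CompactSpace (upperHemi n) := isCompact_iff_compactSpace.1 (isCompact_upperHemi n)
  have hsurj' := (MapsTo.restrict_surjective_iff hT_maps).2 hsurj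
  rw [← hT_push, map_sigmaPlus_of_isometry hT_meas hT_maps
    ((hT_lipOn.mapsToRestrict hT_maps).isometry_of_surjective hsurj') hsurj']

/-- If `ν` has a (normalized) density `f(d(x,N))` w.r.t. `σ_+`, with `f`
positive and continuous on `[0, π/2]`, and the quadratic-cost optimal transport map `T`
from `σ_+` to `ν` is `1`-Lipschitz for the geodesic distance, then `ν = σ_+`. -/
theorem stmt0 (n : ℕ) (hn : 2 ≤ n) (f : ℝ → ℝ)
    (hf_cont : ContinuousOn f (Set.Icc 0 (π / 2)))
    (hf_pos : ∀ t ∈ Set.Icc 0 (π / 2), 0 < f t)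
    (ν : Measure (Euc n)) [IsProbabilityMeasure ν] (Z : ℝ) (hZ : 0 < Z)
    (hν : ν = (sigmaPlus n).withDensity
      (fun x => ENNReal.ofReal (f (geod x (northPole n)) / Z)))
    (T : Euc n → Euc n) (hT_meas : Measurable T)
    (hT_maps : ∀ x ∈ upperHemi n, T x ∈ upperHemi n)
    (hT_push : Measure.map T (sigmaPlus n) = ν)
    (hT_opt : ∀ S : Euc n → Euc n, Measurable S → (∀ x ∈ upperHemi n, S x ∈ upperHemi n) →
      Measure.map S (sigmaPlus n) = ν →
      ∫ x, (geod x (T x)) ^ 2 ∂(sigmaPlus n) ≤ ∫ x, (geod x (S x)) ^ 2 ∂(sigmaPlus n))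
    (hT_lip : ∀ x ∈ upperHemi n, ∀ y ∈ upperHemi n, geod (T x) (T y) ≤ geod x y) :
    ν = sigmaPlus n :=
  stmt0_general n f hf_cont hf_pos ν Z hZ hν T hT_meas hT_maps hT_push hT_lip

end
end

section
/- (Valentine) Let n ≥ 1, let A be a compact subset of the unit sphere S^n, and let T : A → S^n be a map that is 1-Lipschitz with respect to the geodesic distance d. If the image T(A) is not contained in any closed hemisphere (i.e., there is no v ∈ S^n such that v·T(x) ≥ 0 for all x ∈ A), then T is an isometry: d(T(x), T(y)) = d(x,y) for all x, y ∈ A. -/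
open MeasureTheory Real

noncomputable section

/-!
Being `1`-Lipschitz for `arccos ⟪·, ·⟫` means `⟪a, b⟫ ≤ ⟪T a, T b⟫` on `A`. If `T(A)` lies in no
closed hemisphere, `0` is an interior point of the convex hull of `T(A)` (otherwise a supporting
hyperplane through `0` would bound such a hemisphere), so every `T x` enters a linear relation
`∑ wᵢ T pᵢ = 0` with `p₀ = x` and positive weights. Pairing with `T a` gives `⟪a, q⟫ ≤ 0` on `A`
for `q = ∑ wᵢ pᵢ`, hence `⟪q, q⟫ ≤ 0` and `q = 0`. Then the nonnegative gaps
`⟪T a, T pᵢ⟫ - ⟪a, pᵢ⟫`, weighted by the `wᵢ`, add up to `0`, so each of them vanishes.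
-/

open Set Filter Topology RealInnerProductSpace

universe u

theorem exists_pos_smul_mem_of_mem_nhds_zero {E : Type*} [NormedAddCommGroup E] [NormedSpace ℝ E]
    {K : Set E} (hK : K ∈ 𝓝 (0 : E)) (v : E) : ∃ ε : ℝ, 0 < ε ∧ ε • v ∈ K := by
  have hv : Tendsto (fun t : ℝ => t • v) (𝓝[>] 0) (𝓝 0) :=
    ((continuous_id.smul continuous_const).tendsto' 0 0 (zero_smul ℝ v)).mono_left
      nhdsWithin_le_nhds
  obtain ⟨ε, hεK, hε⟩ := ((hv.eventually hK).and self_mem_nhdsWithin).exists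
  exact ⟨ε, hε, hεK⟩

theorem exists_sum_smul_eq_zero_of_zero_mem_interior_convexHull {E : Type u}
    [NormedAddCommGroup E] [NormedSpace ℝ E] {α : Type*} {f : α → E} {A : Set α}
    (h0 : 0 ∈ interior (convexHull ℝ (f '' A))) {x : α} (hx : x ∈ A) :
    ∃ (ι : Type u) (_ : Fintype ι) (p : ι → α) (w : ι → ℝ) (i₀ : ι),
      p i₀ = x ∧ (∀ i, p i ∈ A) ∧ (∀ i, 0 < w i) ∧ ∑ i, w i • f (p i) = 0 := by
  obtain ⟨ε, hε, hεx⟩ := exists_pos_smul_mem_of_mem_nhds_zero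
    (mem_interior_iff_mem_nhds.1 h0) (-f x)
  obtain ⟨ι, _, z, w, hzA, -, hw, -, hz⟩ := eq_pos_convex_span_of_mem_convexHull hεx
  choose p hpA hpz using fun i => hzA (mem_range_self i)
  -- `x` joins the relation `∑ wᵢ • f (pᵢ) = -(ε • f x)` as the extra index `none`, with weight `ε`.
  refine ⟨Option ι, inferInstance, fun o => o.elim x p, fun o => o.elim ε w, none, rfl,
    fun o => o.rec hx hpA, fun o => o.rec hε hw, ?_⟩
  simp [Fintype.sum_option, hpz, hz]

section InnerNondecreasing

variable {E F : Type*} [NormedAddCommGroup E] [InnerProductSpace ℝ E] [NormedAddCommGroup F]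
  [InnerProductSpace ℝ F] {A : Set E} {T : E → F} {ι : Type*} [Fintype ι] {w : ι → ℝ} {p : ι → E}

theorem sum_smul_eq_zero_of_sum_smul_map_eq_zero (hT : ∀ x ∈ A, ∀ y ∈ A, ⟪x, y⟫ ≤ ⟪T x, T y⟫)
    (hw : ∀ i, 0 ≤ w i) (hp : ∀ i, p i ∈ A) (h : ∑ i, w i • T (p i) = 0) :
    ∑ i, w i • p i = 0 := by
  set q := ∑ i, w i • p i
  have hq : ∀ a ∈ A, ⟪a, q⟫ ≤ 0 := fun a ha => calc
    ⟪a, q⟫ = ∑ i, w i * ⟪a, p i⟫ := by simp only [q, inner_sum, real_inner_smul_right]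
    _ ≤ ∑ i, w i * ⟪T a, T (p i)⟫ :=
      Finset.sum_le_sum fun i _ => mul_le_mul_of_nonneg_left (hT a ha _ (hp i)) (hw i)
    _ = 0 := by simp only [← real_inner_smul_right, ← inner_sum, h, inner_zero_right]
  refine real_inner_self_nonpos.1 ?_
  calc ⟪q, q⟫ = ⟪∑ i, w i • p i, q⟫ := rfl
    _ = ∑ i, w i * ⟪p i, q⟫ := by simp only [sum_inner, real_inner_smul_left]
    _ ≤ 0 := Finset.sum_nonpos fun i _ => mul_nonpos_of_nonneg_of_nonpos (hw i) (hq _ (hp i))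

theorem inner_map_eq_of_sum_smul_map_eq_zero (hT : ∀ x ∈ A, ∀ y ∈ A, ⟪x, y⟫ ≤ ⟪T x, T y⟫)
    (hw : ∀ i, 0 ≤ w i) (hp : ∀ i, p i ∈ A) (h : ∑ i, w i • T (p i) = 0) {i : ι} (hi : 0 < w i)
    {a : E} (ha : a ∈ A) : ⟪T a, T (p i)⟫ = ⟪a, p i⟫ := by
  have hp0 := sum_smul_eq_zero_of_sum_smul_map_eq_zero hT hw hp h
  have hgap : ∑ j, w j * (⟪T a, T (p j)⟫ - ⟪a, p j⟫) = 0 := by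
    simp only [mul_sub, Finset.sum_sub_distrib, ← real_inner_smul_right, ← inner_sum, h, hp0,
      inner_zero_right, sub_zero]
  have hgap_nonneg : ∀ j ∈ Finset.univ, 0 ≤ w j * (⟪T a, T (p j)⟫ - ⟪a, p j⟫) :=
    fun j _ => mul_nonneg (hw j) (sub_nonneg.2 (hT a ha _ (hp j)))
  have hi0 := (Finset.sum_eq_zero_iff_of_nonneg hgap_nonneg).1 hgap i (Finset.mem_univ i)
  exact sub_eq_zero.1 ((mul_eq_zero.1 hi0).resolve_left hi.ne')

end InnerNondecreasing

section Separation

variable {E : Type*} [NormedAddCommGroup E] [InnerProductSpace ℝ E] [FiniteDimensional ℝ E]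
  {S : Set E}

theorem exists_ne_zero_inner_eq_of_affineSpan_ne_top {p₀ : E} (hp₀ : p₀ ∈ S)
    (h : affineSpan ℝ S ≠ ⊤) : ∃ v ≠ 0, ∀ p ∈ S, ⟪v, p⟫ = ⟪v, p₀⟫ := by
  have hdir : (affineSpan ℝ S).direction ≠ ⊤ := fun hdir =>
    h ((AffineSubspace.direction_eq_top_iff_of_nonempty ⟨p₀, subset_affineSpan ℝ S hp₀⟩).1 hdir)
  obtain ⟨v, hv, hv0⟩ := Submodule.exists_mem_ne_zero_of_ne_bot
    (mt Submodule.orthogonal_eq_bot_iff.1 hdir)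
  refine ⟨v, hv0, fun p hp => ?_⟩
  have hperp := (Submodule.mem_orthogonal' _ v).1 hv (p -ᵥ p₀)
    (AffineSubspace.vsub_mem_direction (subset_affineSpan ℝ S hp) (subset_affineSpan ℝ S hp₀))
  rwa [vsub_eq_sub, inner_sub_right, sub_eq_zero] at hperp

theorem exists_ne_zero_inner_nonneg_of_zero_notMem_interior_convexHull (hS : S.Nonempty)
    (h : 0 ∉ interior (convexHull ℝ S)) : ∃ v ≠ 0, ∀ p ∈ S, 0 ≤ ⟪v, p⟫ := by
  by_cases hint : (interior (convexHull ℝ S)).Nonempty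
  · obtain ⟨f, hf0, hf⟩ :=
      geometric_hahn_banach_of_nonempty_interior_point (convex_convexHull ℝ S) h hint
    refine ⟨-(InnerProductSpace.toDual ℝ E).symm f, by simpa using hf0, fun p hp => ?_⟩
    simpa [inner_neg_left, InnerProductSpace.toDual_symm_apply] using
      hf p (subset_convexHull ℝ S hp)
  · obtain ⟨p₀, hp₀⟩ := hS
    rw [(convex_convexHull ℝ S).interior_nonempty_iff_affineSpan_eq_top,
      affineSpan_convexHull] at hint
    obtain ⟨v, hv0, hv⟩ := exists_ne_zero_inner_eq_of_affineSpan_ne_top hp₀ hint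
    rcases le_total 0 ⟪v, p₀⟫ with hc | hc
    · exact ⟨v, hv0, fun p hp => (hv p hp).symm ▸ hc⟩
    · refine ⟨-v, neg_ne_zero.2 hv0, fun p hp => ?_⟩
      rw [inner_neg_left, hv p hp]
      exact neg_nonneg.2 hc

end Separation

theorem inner_le_inner_of_geod_le {n : ℕ} {x y x' y' : Euc n} (hx : x ∈ unitSphere n)
    (hy : y ∈ unitSphere n) (hx' : x' ∈ unitSphere n) (hy' : y' ∈ unitSphere n)
    (h : geod x' y' ≤ geod x y) : ⟪x, y⟫ ≤ ⟪x', y'⟫ :=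
  (strictAntiOn_arccos.le_iff_ge
    (real_inner_mem_Icc_of_norm_eq_one (mem_sphere_zero_iff_norm.1 hx')
      (mem_sphere_zero_iff_norm.1 hy'))
    (real_inner_mem_Icc_of_norm_eq_one (mem_sphere_zero_iff_norm.1 hx)
      (mem_sphere_zero_iff_norm.1 hy))).1 h

theorem stmt2_general (n : ℕ) (A : Set (Euc n))
    (hA_sub : A ⊆ unitSphere n) (T : Euc n → Euc n)
    (hT_maps : ∀ x ∈ A, T x ∈ unitSphere n)
    (hT_lip : ∀ x ∈ A, ∀ y ∈ A, geod (T x) (T y) ≤ geod x y)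
    (h_hemi : ¬ ∃ v ∈ unitSphere n, ∀ x ∈ A, 0 ≤ (inner ℝ v (T x) : ℝ)) :
    ∀ x ∈ A, ∀ y ∈ A, geod (T x) (T y) = geod x y := by
  have hT : ∀ x ∈ A, ∀ y ∈ A, ⟪x, y⟫ ≤ ⟪T x, T y⟫ := fun x hx y hy =>
    inner_le_inner_of_geod_le (hA_sub hx) (hA_sub hy) (hT_maps x hx) (hT_maps y hy)
      (hT_lip x hx y hy)
  intro x hx y hy
  have h0 : (0 : Euc n) ∈ interior (convexHull ℝ (T '' A)) := by
    by_contra h0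
    obtain ⟨v, hv0, hv⟩ := exists_ne_zero_inner_nonneg_of_zero_notMem_interior_convexHull
      ⟨T x, mem_image_of_mem T hx⟩ h0
    refine h_hemi ⟨‖v‖⁻¹ • v, by simp [unitSphere, norm_smul, hv0], fun a ha => ?_⟩
    rw [real_inner_smul_left]
    exact mul_nonneg (inv_nonneg.2 (norm_nonneg v)) (hv _ (mem_image_of_mem T ha))
  obtain ⟨ι, _, p, w, i₀, rfl, hpA, hw, hsum⟩ :=
    exists_sum_smul_eq_zero_of_zero_mem_interior_convexHull h0 hx
  rw [geod, geod, real_inner_comm, inner_map_eq_of_sum_smul_map_eq_zero hT (fun i => (hw i).le)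
    hpA hsum (hw i₀) hy, real_inner_comm]

/-- **Valentine.** A `1`-Lipschitz map (for the geodesic distance) defined on a
compact subset of the sphere whose image is not contained in any closed hemisphere is an
isometry. -/
theorem stmt2 (n : ℕ) (hn : 1 ≤ n) (A : Set (Euc n)) (hA_cpt : IsCompact A)
    (hA_sub : A ⊆ unitSphere n) (T : Euc n → Euc n)
    (hT_maps : ∀ x ∈ A, T x ∈ unitSphere n)
    (hT_lip : ∀ x ∈ A, ∀ y ∈ A, geod (T x) (T y) ≤ geod x y)
    (h_hemi : ¬ ∃ v ∈ unitSphere n, ∀ x ∈ A, 0 ≤ (inner ℝ v (T x) : ℝ)) :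
    ∀ x ∈ A, ∀ y ∈ A, geod (T x) (T y) = geod x y :=
  stmt2_general n A hA_sub T hT_maps hT_lip h_hemi

end
end
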